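/- Let Ω ⊂ ℝ^m be a bounded domain with smooth boundary, W ∈ C¹((−∞,1],ℝ) satisfy W(0)=0, W(t)>0 for all t ∈ (−∞,1]\{0}, and W strictly convex, ε > 0, and let u ∈ H¹ ∩ L^∞(Ω; ℝⁿ) be a critical point of E_ε in 𝒜, i.e. ∫_Ω [∇u · ∇v − (1/ε²) W'(1 − |u|²) u · v] dx = 0 for all v ∈ H¹₀(Ω; ℝⁿ). Then for every v ∈ H¹₀(Ω; ℝⁿ), E_ε(u + v) − E_ε(u) ≥ F(v) := ∫_Ω [½ |∇v|² − (1/(2ε²)) W'(1 − |u|²) |v|²] dx, with equality if and only if |u(x) + v(x)| = |u(x)| for a.e. x ∈ Ω. -/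

import Mathlib

open MeasureTheory Set Bornology

noncomputable section

/-- Euclidean dot product on `Fin n → ℝ`. -/
def dotR {n : ℕ} (a b : Fin n → ℝ) : ℝ := ∑ j, a j * b j

/-- Squared Euclidean norm on `Fin n → ℝ`. -/
def normSq {n : ℕ} (a : Fin n → ℝ) : ℝ := ∑ j, a j ^ 2

/-- Pointwise (Frobenius) inner product of gradients `∇u · ∇v`. -/
def gradDot {m n : ℕ} (u v : (Fin m → ℝ) → Fin n → ℝ) (x : Fin m → ℝ) : ℝ :=
  ∑ i, ∑ j, fderiv ℝ u x (Pi.single i (1:ℝ)) j * fderiv ℝ v x (Pi.single i (1:ℝ)) j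

/-- `|∇u|²`. -/
def gradSq {m n : ℕ} (u : (Fin m → ℝ) → Fin n → ℝ) (x : Fin m → ℝ) : ℝ := gradDot u u x

/-- Scalar version of `gradDot`. -/
def gradDotS {m : ℕ} (φ ψ : (Fin m → ℝ) → ℝ) (x : Fin m → ℝ) : ℝ :=
  ∑ i, fderiv ℝ φ x (Pi.single i (1:ℝ)) * fderiv ℝ ψ x (Pi.single i (1:ℝ))

/-- `|∇φ|²` for scalar `φ`. -/
def gradSqS {m : ℕ} (φ : (Fin m → ℝ) → ℝ) (x : Fin m → ℝ) : ℝ := gradDotS φ φ x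

/-- `W'`, the (one-sided) derivative of the potential on `(-∞, 1]`. -/
def Wd (W : ℝ → ℝ) : ℝ → ℝ := derivWithin W (Iic (1:ℝ))

/-- The Ginzburg–Landau energy `E_ε`. -/
def GLenergy {m n : ℕ} (W : ℝ → ℝ) (ε : ℝ) (Ω : Set (Fin m → ℝ))
    (u : (Fin m → ℝ) → Fin n → ℝ) : ℝ :=
  ∫ x in Ω, (gradSq u x / 2 + W (1 - normSq (u x)) / (2 * ε ^ 2))

/-- The admissible class `𝒜`: `H¹` maps attaining the boundary data `ubd` on `∂Ω`. -/
def Admissible {m n : ℕ} (Ω : Set (Fin m → ℝ)) (ubd u : (Fin m → ℝ) → Fin n → ℝ) : Prop :=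
  ContDiffOn ℝ 1 u Ω ∧ ContinuousOn u (closure Ω) ∧
  IntegrableOn (gradSq u) Ω ∧ IntegrableOn (fun x => normSq (u x)) Ω ∧
  EqOn u ubd (frontier Ω)

/-- `H¹₀(Ω; ℝⁿ)`. -/
def H10 {m n : ℕ} (Ω : Set (Fin m → ℝ)) (v : (Fin m → ℝ) → Fin n → ℝ) : Prop :=
  ContDiffOn ℝ 1 v Ω ∧ ContinuousOn v (closure Ω) ∧
  IntegrableOn (gradSq v) Ω ∧ IntegrableOn (fun x => normSq (v x)) Ω ∧
  EqOn v 0 (frontier Ω)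

/-- `H¹₀(Ω; ℝ)`. -/
def H10S {m : ℕ} (Ω : Set (Fin m → ℝ)) (φ : (Fin m → ℝ) → ℝ) : Prop :=
  ContDiffOn ℝ 1 φ Ω ∧ ContinuousOn φ (closure Ω) ∧
  IntegrableOn (gradSqS φ) Ω ∧ IntegrableOn (fun x => φ x ^ 2) Ω ∧
  EqOn φ 0 (frontier Ω)

/-- Critical point of `E_ε`: weak solution of `-Δu = ε⁻² u W'(1-|u|²)` in `Ω`. -/
def IsCritical {m n : ℕ} (W : ℝ → ℝ) (ε : ℝ) (Ω : Set (Fin m → ℝ))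
    (u : (Fin m → ℝ) → Fin n → ℝ) : Prop :=
  ∀ v, H10 Ω v →
    (∫ x in Ω, (gradDot u v x - 1 / ε ^ 2 * Wd W (1 - normSq (u x)) * dotR (u x) (v x))) = 0

/-- Minimiser of `E_ε` over `𝒜`. -/
def IsMinimiser {m n : ℕ} (W : ℝ → ℝ) (ε : ℝ) (Ω : Set (Fin m → ℝ))
    (ubd u : (Fin m → ℝ) → Fin n → ℝ) : Prop :=
  Admissible Ω ubd u ∧ ∀ v, Admissible Ω ubd v → GLenergy W ε Ω u ≤ GLenergy W ε Ω v

/-- Orthogonal transformation of `ℝⁿ` (element of `O(n)`). -/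
def IsOrth {n : ℕ} (R : (Fin n → ℝ) →ₗ[ℝ] (Fin n → ℝ)) : Prop :=
  Function.Bijective R ∧ ∀ a b, dotR (R a) (R b) = dotR a b

/-!
Write `a = 1 - |u|²` and `b = 1 - |u + v|²`. Expanding the energy density of `u + v` around `u`
splits `E_ε(u + v) - E_ε(u)` into `F(v)`, the first variation of `E_ε` at `u` in the direction
`v` (which vanishes because `u` is critical), and the integral of the Bregman divergence
`W(b) - W(a) - W'(a)(b - a)` divided by `2ε²`. Convexity of `W` makes this remainder
nonnegative, and strict convexity makes it vanish exactly where `a = b`, i.e. where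
`|u + v| = |u|`. Every term not involving gradients is a continuous function of `(u, v)`, which
ranges over a bounded set, so all the integrals split.
-/

theorem StrictConvexOn.add_derivWithin_mul_sub_lt {S : Set ℝ} {f : ℝ → ℝ}
    (hf : StrictConvexOn ℝ S f) {x y : ℝ} (hx : x ∈ S) (hy : y ∈ S) (hxy : x ≠ y)
    (hfd : DifferentiableWithinAt ℝ f S x) :
    f x + derivWithin f S x * (y - x) < f y := by
  rcases hxy.lt_or_gt with h | h
  · have := hf.derivWithin_lt_slope hx hy h hfd
    rw [slope_def_field, lt_div_iff₀ (sub_pos.2 h)] at this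
    linarith
  · have := hf.slope_lt_derivWithin hy hx h hfd
    rw [slope_def_field, div_lt_iff₀ (sub_pos.2 h)] at this
    linarith

def bregmanDiv (f : ℝ → ℝ) (S : Set ℝ) (a b : ℝ) : ℝ :=
  f b - f a - derivWithin f S a * (b - a)

theorem StrictConvexOn.bregmanDiv_pos {S : Set ℝ} {f : ℝ → ℝ} (hf : StrictConvexOn ℝ S f)
    {a b : ℝ} (ha : a ∈ S) (hb : b ∈ S) (hab : a ≠ b) (hfd : DifferentiableWithinAt ℝ f S a) :
    0 < bregmanDiv f S a b := by
  have := hf.add_derivWithin_mul_sub_lt ha hb hab hfd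
  unfold bregmanDiv
  linarith

theorem StrictConvexOn.bregmanDiv_nonneg {S : Set ℝ} {f : ℝ → ℝ} (hf : StrictConvexOn ℝ S f)
    {a b : ℝ} (ha : a ∈ S) (hb : b ∈ S) (hfd : DifferentiableWithinAt ℝ f S a) :
    0 ≤ bregmanDiv f S a b := by
  rcases eq_or_ne a b with rfl | hab
  · simp [bregmanDiv]
  · exact (hf.bregmanDiv_pos ha hb hab hfd).le

theorem StrictConvexOn.bregmanDiv_eq_zero_iff {S : Set ℝ} {f : ℝ → ℝ}
    (hf : StrictConvexOn ℝ S f) {a b : ℝ} (ha : a ∈ S) (hb : b ∈ S)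
    (hfd : DifferentiableWithinAt ℝ f S a) :
    bregmanDiv f S a b = 0 ↔ a = b := by
  refine ⟨fun h => ?_, fun h => by simp [h, bregmanDiv]⟩
  by_contra hab
  exact (hf.bregmanDiv_pos ha hb hab hfd).ne' h

theorem integrableOn_comp_of_isBounded_image {X Y : Type*} [MeasurableSpace X]
    [TopologicalSpace X] [OpensMeasurableSpace X] [SecondCountableTopology X]
    [PseudoMetricSpace Y] [ProperSpace Y] {μ : Measure X} {s : Set X} (hs : MeasurableSet s)
    (hμs : μ s ≠ ⊤) {f : X → Y} (hf : ContinuousOn f s) (hfs : IsBounded (f '' s))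
    {Φ : Y → ℝ} (hΦ : Continuous Φ) : IntegrableOn (fun x => Φ (f x)) s μ := by
  obtain ⟨C, hC⟩ := hfs.isCompact_closure.exists_bound_of_continuousOn hΦ.continuousOn
  exact (integrableOn_const hμs).mono' ((hΦ.comp_continuousOn hf).aestronglyMeasurable hs)
    (ae_restrict_of_forall_mem hs fun x hx => hC _ (subset_closure (mem_image_of_mem f hx)))

theorem abs_sum_sum_mul_le {ι κ : Type*} (s : Finset ι) (t : Finset κ) (a b : ι → κ → ℝ) :
    |∑ i ∈ s, ∑ j ∈ t, a i j * b i j|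
      ≤ (∑ i ∈ s, ∑ j ∈ t, a i j * a i j + ∑ i ∈ s, ∑ j ∈ t, b i j * b i j) / 2 := by
  calc |∑ i ∈ s, ∑ j ∈ t, a i j * b i j| ≤ ∑ i ∈ s, ∑ j ∈ t, |a i j * b i j| :=
        (Finset.abs_sum_le_sum_abs _ _).trans
          (Finset.sum_le_sum fun i _ => Finset.abs_sum_le_sum_abs _ _)
    _ ≤ ∑ i ∈ s, ∑ j ∈ t, (a i j * a i j + b i j * b i j) / 2 :=
        Finset.sum_le_sum fun i _ => Finset.sum_le_sum fun j _ => by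
          rw [abs_le]
          constructor <;> nlinarith [sq_nonneg (a i j + b i j), sq_nonneg (a i j - b i j)]
    _ = _ := by simp only [add_div, Finset.sum_add_distrib, Finset.sum_div]

theorem normSq_nonneg {n : ℕ} (a : Fin n → ℝ) : 0 ≤ normSq a :=
  Finset.sum_nonneg fun _ _ => sq_nonneg _

theorem continuous_normSq {n : ℕ} : Continuous (normSq : (Fin n → ℝ) → ℝ) := by
  unfold normSq
  fun_prop

theorem continuous_dotR {n : ℕ} :
    Continuous fun p : (Fin n → ℝ) × (Fin n → ℝ) => dotR p.1 p.2 := by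
  unfold dotR
  fun_prop

theorem one_sub_normSq_mem_Iic {n : ℕ} (a : Fin n → ℝ) : 1 - normSq a ∈ Iic (1 : ℝ) := by
  simp [normSq_nonneg]

theorem ContinuousOn.comp_one_sub_normSq {n : ℕ} {g : ℝ → ℝ} (hg : ContinuousOn g (Iic 1)) :
    Continuous fun a : Fin n → ℝ => g (1 - normSq a) :=
  hg.comp_continuous (continuous_const.sub continuous_normSq) one_sub_normSq_mem_Iic

theorem normSq_add {n : ℕ} (a b : Fin n → ℝ) :
    normSq (a + b) = normSq a + 2 * dotR a b + normSq b := by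
  simp only [normSq, dotR, Pi.add_apply, Finset.mul_sum, ← Finset.sum_add_distrib]
  exact Finset.sum_congr rfl fun j _ => by ring

section Energy

variable {m n : ℕ} {Ω : Set (Fin m → ℝ)} {W : ℝ → ℝ} {ε : ℝ} {u v : (Fin m → ℝ) → Fin n → ℝ}

theorem abs_gradDot_le (u v : (Fin m → ℝ) → Fin n → ℝ) (x : Fin m → ℝ) :
    |gradDot u v x| ≤ (gradSq u x + gradSq v x) / 2 :=
  abs_sum_sum_mul_le _ _ _ _

theorem gradSq_add {x : Fin m → ℝ} (hu : DifferentiableAt ℝ u x) (hv : DifferentiableAt ℝ v x) :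
    gradSq (u + v) x = gradSq u x + 2 * gradDot u v x + gradSq v x := by
  simp only [gradSq, gradDot, fderiv_add hu hv, add_apply, Pi.add_apply, Finset.mul_sum,
    ← Finset.sum_add_distrib]
  exact Finset.sum_congr rfl fun i _ => Finset.sum_congr rfl fun j _ => by ring

theorem continuousOn_gradDot (hΩ : IsOpen Ω) (hu : ContDiffOn ℝ 1 u Ω)
    (hv : ContDiffOn ℝ 1 v Ω) : ContinuousOn (gradDot u v) Ω := by
  have hdu := hu.continuousOn_fderiv_of_isOpen hΩ le_rfl
  have hdv := hv.continuousOn_fderiv_of_isOpen hΩ le_rfl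
  unfold gradDot
  fun_prop

theorem integrableOn_gradDot (hΩ : IsOpen Ω) (hu : ContDiffOn ℝ 1 u Ω) (hv : ContDiffOn ℝ 1 v Ω)
    (hug : IntegrableOn (gradSq u) Ω) (hvg : IntegrableOn (gradSq v) Ω) :
    IntegrableOn (gradDot u v) Ω :=
  ((hug.add hvg).div_const 2).mono'
    ((continuousOn_gradDot hΩ hu hv).aestronglyMeasurable hΩ.measurableSet)
    (ae_restrict_of_forall_mem hΩ.measurableSet fun x _ => abs_gradDot_le u v x)

theorem isBounded_image_of_H10 (hΩ : IsBounded Ω) (hv : H10 Ω v) : IsBounded (v '' Ω) :=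
  (hΩ.isCompact_closure.image_of_continuousOn hv.2.1).isBounded.subset
    (image_mono subset_closure)

theorem integrableOn_comp_prodMk_of_H10 (hΩm : MeasurableSet Ω) (hΩb : IsBounded Ω)
    (hu : ContinuousOn u Ω) (hub : IsBounded (u '' Ω)) (hv : H10 Ω v)
    {Φ : (Fin n → ℝ) × (Fin n → ℝ) → ℝ} (hΦ : Continuous Φ) :
    IntegrableOn (fun x => Φ (u x, v x)) Ω :=
  integrableOn_comp_of_isBounded_image hΩm hΩb.measure_lt_top.ne
    (hu.prodMk hv.1.continuousOn)
    ((hub.prod (isBounded_image_of_H10 hΩb hv)).subset image_prodMk_subset_prod) hΦ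

theorem continuous_bregmanDiv_one_sub_normSq (hW : ContDiffOn ℝ 1 W (Iic 1)) :
    Continuous fun p : (Fin n → ℝ) × (Fin n → ℝ) =>
      bregmanDiv W (Iic 1) (1 - normSq p.1) (1 - normSq (p.1 + p.2)) := by
  have hWc := hW.continuousOn.comp_one_sub_normSq (n := n)
  have hWdc := (hW.continuousOn_derivWithin (uniqueDiffOn_Iic 1) le_rfl).comp_one_sub_normSq
    (n := n)
  have hnorm : Continuous fun p : (Fin n → ℝ) × (Fin n → ℝ) => normSq (p.1 + p.2) :=
    continuous_normSq.comp (continuous_fst.add continuous_snd)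
  exact ((hWc.comp (continuous_fst.add continuous_snd)).sub (hWc.comp continuous_fst)).sub
    ((hWdc.comp continuous_fst).mul
      ((continuous_const.sub hnorm).sub
        (continuous_const.sub (continuous_normSq.comp continuous_fst))))

def energyDensity (W : ℝ → ℝ) (ε : ℝ) (u : (Fin m → ℝ) → Fin n → ℝ) (x : Fin m → ℝ) : ℝ :=
  gradSq u x / 2 + W (1 - normSq (u x)) / (2 * ε ^ 2)

theorem energyDensity_add {x : Fin m → ℝ} (hu : DifferentiableAt ℝ u x)
    (hv : DifferentiableAt ℝ v x) :
    energyDensity W ε (u + v) x = energyDensity W ε u x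
      + (gradSq v x / 2 - 1 / (2 * ε ^ 2) * Wd W (1 - normSq (u x)) * normSq (v x))
      + (gradDot u v x - 1 / ε ^ 2 * Wd W (1 - normSq (u x)) * dotR (u x) (v x))
      + bregmanDiv W (Iic 1) (1 - normSq (u x)) (1 - normSq (u x + v x)) / (2 * ε ^ 2) := by
  simp only [energyDensity, bregmanDiv, Pi.add_apply, gradSq_add hu hv, normSq_add, Wd]
  ring

theorem GLenergy_eq_integral_energyDensity :
    GLenergy W ε Ω u = ∫ x in Ω, energyDensity W ε u x :=
  rfl

theorem GLenergy_add_sub_eq (hΩ : IsOpen Ω) (hW : ContDiffOn ℝ 1 W (Iic 1))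
    (hu : ContDiffOn ℝ 1 u Ω) (hug : IntegrableOn (gradSq u) Ω) (hv : H10 Ω v)
    (hbdd : ∀ Φ : (Fin n → ℝ) × (Fin n → ℝ) → ℝ, Continuous Φ →
      IntegrableOn (fun x => Φ (u x, v x)) Ω)
    (huC : IsCritical W ε Ω u) :
    GLenergy W ε Ω (u + v) - GLenergy W ε Ω u =
      (∫ x in Ω, (gradSq v x / 2 - 1 / (2 * ε ^ 2) * Wd W (1 - normSq (u x)) * normSq (v x)))
        + ∫ x in Ω,
            bregmanDiv W (Iic 1) (1 - normSq (u x)) (1 - normSq (u x + v x)) / (2 * ε ^ 2) := by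
  obtain ⟨hv1, -, hvg, -, -⟩ := id hv
  have hWc := hW.continuousOn.comp_one_sub_normSq (n := n)
  have hWdc := (hW.continuousOn_derivWithin (uniqueDiffOn_Iic 1) le_rfl).comp_one_sub_normSq
    (n := n)
  have ie : IntegrableOn (energyDensity W ε u) Ω :=
    (hug.div_const 2).add (hbdd _ ((hWc.comp continuous_fst).div_const (2 * ε ^ 2)))
  have iF : IntegrableOn (fun x =>
      gradSq v x / 2 - 1 / (2 * ε ^ 2) * Wd W (1 - normSq (u x)) * normSq (v x)) Ω :=
    (hvg.div_const 2).sub (hbdd (fun p => 1 / (2 * ε ^ 2) * Wd W (1 - normSq p.1) * normSq p.2)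
      ((continuous_const.mul (hWdc.comp continuous_fst)).mul
        (continuous_normSq.comp continuous_snd)))
  have iC : IntegrableOn (fun x =>
      gradDot u v x - 1 / ε ^ 2 * Wd W (1 - normSq (u x)) * dotR (u x) (v x)) Ω :=
    (integrableOn_gradDot hΩ hu hv1 hug hvg).sub
      (hbdd (fun p => 1 / ε ^ 2 * Wd W (1 - normSq p.1) * dotR p.1 p.2)
        ((continuous_const.mul (hWdc.comp continuous_fst)).mul continuous_dotR))
  have ig : IntegrableOn (fun x =>
      bregmanDiv W (Iic 1) (1 - normSq (u x)) (1 - normSq (u x + v x)) / (2 * ε ^ 2)) Ω :=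
    hbdd (fun p => bregmanDiv W (Iic 1) (1 - normSq p.1) (1 - normSq (p.1 + p.2)) / (2 * ε ^ 2))
      ((continuous_bregmanDiv_one_sub_normSq hW).div_const _)
  have hsplit : ∀ x ∈ Ω, energyDensity W ε (u + v) x = _ := fun x hx =>
    energyDensity_add ((hu.differentiableOn one_ne_zero).differentiableAt (hΩ.mem_nhds hx))
      ((hv1.differentiableOn one_ne_zero).differentiableAt (hΩ.mem_nhds hx))
  simp only [GLenergy_eq_integral_energyDensity]
  rw [setIntegral_congr_fun hΩ.measurableSet hsplit, integral_add ?_ ig,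
    integral_add ?_ iC, integral_add ie iF, huC v hv]
  · ring
  · exact ie.add iF
  · exact (ie.add iF).add iC

end Energy

theorem statement_16_general {m n : ℕ}
    (Ω : Set (Fin m → ℝ)) (hΩo : IsOpen Ω) (hΩb : IsBounded Ω)
    (W : ℝ → ℝ) (hW : ContDiffOn ℝ 1 W (Iic (1:ℝ)))
    (hWconv : StrictConvexOn ℝ (Iic (1:ℝ)) W)
    (ε : ℝ) (hε : 0 < ε)
    (ubd : (Fin m → ℝ) → Fin n → ℝ)
    (u : (Fin m → ℝ) → Fin n → ℝ)
    (huA : Admissible Ω ubd u) (huL : IsBounded (u '' Ω))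
    (huC : IsCritical W ε Ω u) :
    ∀ v, H10 Ω v →
      ((∫ x in Ω, (gradSq v x / 2 - 1 / (2 * ε ^ 2) * Wd W (1 - normSq (u x)) * normSq (v x)))
          ≤ GLenergy W ε Ω (u + v) - GLenergy W ε Ω u) ∧
      (GLenergy W ε Ω (u + v) - GLenergy W ε Ω u =
          (∫ x in Ω, (gradSq v x / 2 - 1 / (2 * ε ^ 2) * Wd W (1 - normSq (u x)) * normSq (v x)))
        ↔ ∀ᵐ x ∂(volume.restrict Ω), normSq (u x + v x) = normSq (u x)) := by
  intro v hv
  obtain ⟨hu, -, hug, -, -⟩ := huA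
  have hbdd := fun Φ (hΦ : Continuous Φ) =>
    integrableOn_comp_prodMk_of_H10 hΩo.measurableSet hΩb hu.continuousOn huL hv hΦ
  set g := fun x => bregmanDiv W (Iic 1) (1 - normSq (u x)) (1 - normSq (u x + v x)) / (2 * ε ^ 2)
  have hg : IntegrableOn g Ω := hbdd _ ((continuous_bregmanDiv_one_sub_normSq hW).div_const _)
  have hWd : ∀ x, DifferentiableWithinAt ℝ W (Iic 1) (1 - normSq (u x)) := fun x =>
    hW.differentiableOn one_ne_zero _ (one_sub_normSq_mem_Iic _)
  have hg0 : 0 ≤ g := fun x => div_nonneg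
    (hWconv.bregmanDiv_nonneg (one_sub_normSq_mem_Iic _) (one_sub_normSq_mem_Iic _) (hWd x))
    (by positivity)
  have hg_eq_zero : ∀ x, g x = 0 ↔ normSq (u x + v x) = normSq (u x) := fun x => by
    rw [div_eq_zero_iff, or_iff_left (by positivity), hWconv.bregmanDiv_eq_zero_iff
      (one_sub_normSq_mem_Iic _) (one_sub_normSq_mem_Iic _) (hWd x), sub_right_inj, eq_comm]
  rw [GLenergy_add_sub_eq hΩo hW hu hug hv hbdd huC]
  refine ⟨le_add_of_nonneg_right (setIntegral_nonneg hΩo.measurableSet fun x _ => hg0 x), ?_⟩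
  rw [add_eq_left, integral_eq_zero_iff_of_nonneg hg0 hg]
  simp only [Filter.EventuallyEq, Pi.zero_apply, hg_eq_zero]

/-- Step 1 of the proof of Theorem 1.3: the energy difference at a
critical point is bounded below by the quadratic form `F`, with equality iff
`|u + v| = |u|` a.e. in `Ω`. -/
theorem statement_16 {m n : ℕ}
    (Ω : Set (Fin m → ℝ)) (hΩo : IsOpen Ω) (hΩc : IsConnected Ω) (hΩb : IsBounded Ω)
    (W : ℝ → ℝ) (hW : ContDiffOn ℝ 1 W (Iic (1:ℝ))) (hW0 : W 0 = 0)
    (hWpos : ∀ t ∈ Iic (1:ℝ), t ≠ 0 → 0 < W t)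
    (hWconv : StrictConvexOn ℝ (Iic (1:ℝ)) W)
    (ε : ℝ) (hε : 0 < ε)
    (ubd : (Fin m → ℝ) → Fin n → ℝ)
    (u : (Fin m → ℝ) → Fin n → ℝ)
    (huA : Admissible Ω ubd u) (huL : IsBounded (u '' Ω))
    (huC : IsCritical W ε Ω u) :
    ∀ v, H10 Ω v →
      ((∫ x in Ω, (gradSq v x / 2 - 1 / (2 * ε ^ 2) * Wd W (1 - normSq (u x)) * normSq (v x)))
          ≤ GLenergy W ε Ω (u + v) - GLenergy W ε Ω u) ∧
      (GLenergy W ε Ω (u + v) - GLenergy W ε Ω u =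
          (∫ x in Ω, (gradSq v x / 2 - 1 / (2 * ε ^ 2) * Wd W (1 - normSq (u x)) * normSq (v x)))
        ↔ ∀ᵐ x ∂(volume.restrict Ω), normSq (u x + v x) = normSq (u x)) :=
  statement_16_general Ω hΩo hΩb W hW hWconv ε hε ubd u huA huL huC
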